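/- arXiv:0908.4575 — 3 statements merged into one kernel-verified Lean document; each statement's English description precedes it below -/
import Mathlib

section
/- For a measure-preserving ergodic transformation F of a probability space (Ω,μ) and a measurable set S with μ(S)>0, Kac's lemma holds: the integral over S of the first return time τ_S(x) with respect to μ equals 1, equivalently the μ-conditional expectation of τ_S on S equals 1/μ(S). -/
open MeasureTheory ENNReal Filter Topology

/-
Let `E n` be the set of points that avoid `S` at the times `1, …, n`. Since `E (n+1) = F⁻¹ (E n \ S)`
and `F` preserves `μ`, we get `μ (E n) = μ (S ∩ E n) + μ (E (n+1))`, which telescopes to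
`∑ n, μ (S ∩ E n) = 1 - μ (⋂ n, E n) = μ {x | x visits S at some positive time}`. On the other hand,
on points of `S` that do return, `τ_S = ∑ n, 𝟙_{E n}`, and by Poincaré recurrence these are almost
all points of `S`; so the left-hand side is `∫_S τ_S dμ`. Ergodicity makes the set of visiting
points conull.
-/

section ReturnTime

variable {α : Type*} {f : α → α} {s : Set α}

-- Points that never return get `sInf ∅ = 0`.
noncomputable def firstReturnTime (f : α → α) (s : Set α) (x : α) : ℕ :=
  sInf {n : ℕ | 1 ≤ n ∧ f^[n] x ∈ s}

def visitSet (f : α → α) (s : Set α) : Set α :=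
  {x | ∃ n, 1 ≤ n ∧ f^[n] x ∈ s}

def noVisitUpTo (f : α → α) (s : Set α) (n : ℕ) : Set α :=
  {x | ∀ k, 1 ≤ k → k ≤ n → f^[k] x ∉ s}

theorem noVisitUpTo_zero : noVisitUpTo f s 0 = Set.univ := by
  ext x
  simp only [noVisitUpTo, Set.mem_ofPred_eq, Set.mem_univ, iff_true]
  omega

theorem noVisitUpTo_succ (n : ℕ) : noVisitUpTo f s (n + 1) = f ⁻¹' (noVisitUpTo f s n \ s) := by
  ext x
  simp only [noVisitUpTo, Set.mem_preimage, Set.mem_sdiff, Set.mem_ofPred_eq]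
  constructor
  · intro hx
    refine ⟨fun k hk1 hkn => ?_, by simpa using hx 1 le_rfl (by omega)⟩
    rw [← Function.iterate_succ_apply]
    exact hx (k + 1) (by omega) (by omega)
  · rintro ⟨hE, hs⟩ (_ | k) hk1 hkn
    · omega
    · rcases k.eq_zero_or_pos with rfl | hk
      · simpa using hs
      · rw [Function.iterate_succ_apply]
        exact hE k hk (by omega)

theorem antitone_noVisitUpTo : Antitone (noVisitUpTo f s) :=
  fun _ _ hmn _ hx k hk1 hkn => hx k hk1 (hkn.trans hmn)

theorem iInter_noVisitUpTo : ⋂ n, noVisitUpTo f s n = (visitSet f s)ᶜ := by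
  ext x
  simp only [noVisitUpTo, visitSet, Set.mem_iInter, Set.mem_ofPred_eq, Set.mem_compl_iff,
    not_exists, not_and]
  exact ⟨fun h k hk => h k k hk le_rfl, fun h _ k hk _ => h k hk⟩

theorem preimage_visitSet_subset : f ⁻¹' visitSet f s ⊆ visitSet f s := by
  rintro x ⟨n, -, hn⟩
  exact ⟨n + 1, by omega, by rwa [Function.iterate_succ_apply]⟩

theorem mem_noVisitUpTo_iff_lt_firstReturnTime {x : α} (hx : x ∈ visitSet f s) (n : ℕ) :
    x ∈ noVisitUpTo f s n ↔ n < firstReturnTime f s x := by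
  have hmem : firstReturnTime f s x ∈ {k : ℕ | 1 ≤ k ∧ f^[k] x ∈ s} := Nat.sInf_mem hx
  constructor
  · intro hxE
    by_contra! hle
    exact hxE _ hmem.1 hle hmem.2
  · intro hlt k hk1 hkn hks
    have : firstReturnTime f s x ≤ k := Nat.sInf_le ⟨hk1, hks⟩
    omega

theorem firstReturnTime_eq_tsum_indicator {x : α} (hx : x ∈ visitSet f s) :
    (firstReturnTime f s x : ℝ≥0∞) = ∑' n, (noVisitUpTo f s n).indicator 1 x := by
  classical
  simp only [Set.indicator_apply, mem_noVisitUpTo_iff_lt_firstReturnTime hx, Pi.one_apply]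
  rw [tsum_eq_sum (s := Finset.range (firstReturnTime f s x)) fun n hn => if_neg (by simpa using hn),
    Finset.sum_ite_of_true fun n hn => Finset.mem_range.1 hn]
  simp

variable [MeasurableSpace α]

theorem measurableSet_noVisitUpTo (hf : Measurable f) (hs : MeasurableSet s) (n : ℕ) :
    MeasurableSet (noVisitUpTo f s n) := by
  induction n with
  | zero => simp [noVisitUpTo_zero]
  | succ n ih => rw [noVisitUpTo_succ]; exact hf (ih.diff hs)

theorem measurableSet_visitSet (hf : Measurable f) (hs : MeasurableSet s) :
    MeasurableSet (visitSet f s) := by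
  rw [← compl_compl (visitSet f s), ← iInter_noVisitUpTo]
  exact (MeasurableSet.iInter (measurableSet_noVisitUpTo hf hs)).compl

variable {μ : Measure α}

theorem sum_measure_inter_noVisitUpTo_add (hf : MeasurePreserving f μ μ) (hs : MeasurableSet s)
    (N : ℕ) :
    ∑ n ∈ Finset.range N, μ (s ∩ noVisitUpTo f s n) + μ (noVisitUpTo f s N) = μ Set.univ := by
  induction N with
  | zero => simp [noVisitUpTo_zero]
  | succ N ih =>
    have hE := measurableSet_noVisitUpTo hf.measurable hs N
    rw [Finset.sum_range_succ, add_assoc, noVisitUpTo_succ,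
      hf.measure_preimage (hE.diff hs).nullMeasurableSet, Set.inter_comm,
      measure_inter_add_sdiff _ hs, ih]

theorem tsum_measure_inter_noVisitUpTo [IsFiniteMeasure μ] (hf : MeasurePreserving f μ μ)
    (hs : MeasurableSet s) :
    ∑' n, μ (s ∩ noVisitUpTo f s n) = μ (visitSet f s) := by
  have hE := measurableSet_noVisitUpTo hf.measurable hs
  have hsum := ENNReal.tendsto_nat_tsum fun n => μ (s ∩ noVisitUpTo f s n)
  have hrest : Tendsto (fun N => μ (noVisitUpTo f s N)) atTop
      (𝓝 (μ (visitSet f s)ᶜ)) := by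
    rw [← iInter_noVisitUpTo]
    exact tendsto_measure_iInter_atTop (fun n => (hE n).nullMeasurableSet) antitone_noVisitUpTo
      ⟨0, measure_ne_top μ _⟩
  have htotal : ∑' n, μ (s ∩ noVisitUpTo f s n) + μ (visitSet f s)ᶜ = μ Set.univ :=
    tendsto_nhds_unique (hsum.add hrest)
      (by simp only [sum_measure_inter_noVisitUpTo_add hf hs, tendsto_const_nhds])
  rw [← measure_add_measure_compl (measurableSet_visitSet hf.measurable hs)] at htotal
  exact (ENNReal.add_left_inj (measure_ne_top μ _)).1 htotal

theorem ae_restrict_mem_visitSet [IsFiniteMeasure μ] (hf : MeasurePreserving f μ μ)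
    (hs : MeasurableSet s) : ∀ᵐ x ∂μ.restrict s, x ∈ visitSet f s := by
  rw [ae_restrict_iff' hs]
  filter_upwards [hf.conservative.ae_mem_imp_frequently_image_mem hs.nullMeasurableSet]
    with x hx hxs
  obtain ⟨n, hn, hpos⟩ := ((hx hxs).and_eventually (eventually_ge_atTop 1)).exists
  exact ⟨n, hpos, hn⟩

theorem lintegral_firstReturnTime [IsFiniteMeasure μ] (hf : MeasurePreserving f μ μ)
    (hs : MeasurableSet s) :
    ∫⁻ x in s, (firstReturnTime f s x : ℝ≥0∞) ∂μ = μ (visitSet f s) := by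
  have hE := measurableSet_noVisitUpTo hf.measurable hs
  calc ∫⁻ x in s, (firstReturnTime f s x : ℝ≥0∞) ∂μ
      = ∫⁻ x in s, ∑' n, (noVisitUpTo f s n).indicator 1 x ∂μ :=
        lintegral_congr_ae <| (ae_restrict_mem_visitSet hf hs).mono
          fun x hx => firstReturnTime_eq_tsum_indicator hx
    _ = ∑' n, μ (s ∩ noVisitUpTo f s n) := by
        rw [lintegral_tsum fun n => (measurable_one.indicator (hE n)).aemeasurable]
        congr 1 with n
        rw [lintegral_indicator_one (hE n), Measure.restrict_apply (hE n), Set.inter_comm]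
    _ = μ (visitSet f s) := tsum_measure_inter_noVisitUpTo hf hs

theorem Ergodic.measure_visitSet [IsFiniteMeasure μ] (hf : Ergodic f μ) (hs : MeasurableSet s)
    (hμs : μ s ≠ 0) :
    μ (visitSet f s) = μ Set.univ := by
  have hV := measurableSet_visitSet hf.measurable hs
  rcases hf.ae_empty_or_univ_of_preimage_ae_le hV.nullMeasurableSet
      preimage_visitSet_subset.eventuallyLE with h | h
  · have hnull : μ (visitSet f s) = 0 := (measure_congr h).trans measure_empty
    have : μ (f ⁻¹' s) = 0 :=
      measure_mono_null (fun x (hx : f x ∈ s) => (⟨1, le_rfl, hx⟩ : x ∈ visitSet f s)) hnull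
    exact absurd (hf.measure_preimage hs.nullMeasurableSet ▸ this) hμs
  · exact measure_congr h

end ReturnTime

theorem kac_lemma {Ω : Type*} [MeasurableSpace Ω] (μ : Measure Ω)
    [IsProbabilityMeasure μ] (F : Ω → Ω) (hErg : Ergodic F μ)
    (S : Set Ω) (hS : MeasurableSet S) (hpos : 0 < μ S) :
    ∫⁻ x in S, ((sInf {n : ℕ | 1 ≤ n ∧ F^[n] x ∈ S} : ℕ) : ℝ≥0∞) ∂μ = 1 := by
  calc ∫⁻ x in S, (firstReturnTime F S x : ℝ≥0∞) ∂μ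
      = μ (visitSet F S) := lintegral_firstReturnTime hErg.toMeasurePreserving hS
    _ = μ Set.univ := hErg.measure_visitSet hS hpos.ne'
    _ = 1 := measure_univ
end

section
/- For the tent map F, a point x∈[0,1] is periodic of period dividing n if and only if x = 2k/(2^n+1) or x = 2k/(2^n−1) for suitable integers k; in particular the set of periodic points of F is dense in [0,1]. -/
noncomputable def tent (x : ℝ) : ℝ := if x ≤ 1/2 then 2*x else 2-2*x

/-! With `saw t` the distance from `t` to `2ℤ`, one has `tent ∘ saw = saw ∘ (2 * ·)` and `saw` is
the identity on `[0, 1]`, so `tent^[n] x = saw (2 ^ n * x)` there. Since `saw` is even and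
`2`-periodic, `saw y = x` exactly when `y ≡ ± x (mod 2)`, i.e. `2 ^ n * x = ± x + 2 k`; solving for
`x` gives the two families. Density follows because the points `2 k / (2 ^ n - 1)` form a
`2 / (2 ^ n - 1)`-net of `[0, 1]`. -/

open Set

/-- The distance from `t` to `2ℤ`. -/
noncomputable def saw (t : ℝ) : ℝ := 1 - |2 * Int.fract (t / 2) - 1|

lemma saw_of_mem_Icc {x : ℝ} (hx : x ∈ Icc (0 : ℝ) 1) : saw x = x := by
  have hfract : Int.fract (x / 2) = x / 2 :=
    Int.fract_eq_self.2 ⟨by linarith [hx.1], by linarith [hx.2]⟩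
  rw [saw, hfract, abs_of_nonpos (by linarith [hx.2])]
  ring

lemma saw_add_two_mul_intCast (t : ℝ) (k : ℤ) : saw (t + 2 * k) = saw t := by
  rw [saw, saw, show (t + 2 * (k : ℝ)) / 2 = t / 2 + k by ring, Int.fract_add_intCast]

lemma saw_neg (t : ℝ) : saw (-t) = saw t := by
  rw [saw, saw, neg_div]
  by_cases h : Int.fract (t / 2) = 0
  · rw [Int.fract_neg_eq_zero.2 h, h]
  · rw [Int.fract_neg h, ← abs_neg]
    ring_nf

lemma saw_eq_iff {x : ℝ} (hx : x ∈ Icc (0 : ℝ) 1) (y : ℝ) :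
    saw y = x ↔ ∃ k : ℤ, y = -x + 2 * k ∨ y = x + 2 * k := by
  constructor
  · intro h
    set u := Int.fract (y / 2)
    have hy : y = 2 * u + 2 * ⌊y / 2⌋ := by linarith [Int.floor_add_fract (y / 2)]
    rw [saw] at h
    rcases le_or_gt (2 * u) 1 with hu | hu
    · rw [abs_of_nonpos (by linarith)] at h
      exact ⟨⌊y / 2⌋, Or.inr (by linarith)⟩
    · rw [abs_of_nonneg (by linarith)] at h
      exact ⟨⌊y / 2⌋ + 1, Or.inl (by push_cast; linarith)⟩
  · rintro ⟨k, rfl | rfl⟩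
    · rw [saw_add_two_mul_intCast, saw_neg, saw_of_mem_Icc hx]
    · rw [saw_add_two_mul_intCast, saw_of_mem_Icc hx]

lemma tent_saw (t : ℝ) : tent (saw t) = saw (2 * t) := by
  rw [saw, saw, show 2 * t / 2 = t by ring]
  set u := Int.fract (t / 2)
  have hu0 : 0 ≤ u := Int.fract_nonneg _
  have hu1 : u < 1 := Int.fract_lt_one _
  have hfract : Int.fract t = Int.fract (2 * u) := by
    have ht : t = 2 * u + ((2 * ⌊t / 2⌋ : ℤ) : ℝ) := by
      push_cast; linarith [Int.floor_add_fract (t / 2)]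
    rw [ht, Int.fract_add_intCast]
  rw [hfract, tent]
  rcases lt_or_ge u (1 / 2) with hu | hu
  · rw [Int.fract_eq_self.2 ⟨by linarith, by linarith⟩, abs_of_nonpos (by linarith : 2 * u - 1 ≤ 0)]
    rcases le_or_gt u (1 / 4) with hu' | hu'
    · rw [if_pos (by linarith), abs_of_nonpos (by linarith)]; ring
    · rw [if_neg (by linarith), abs_of_nonneg (by linarith)]; ring
  · have hfract2 : Int.fract (2 * u) = 2 * u - 1 :=
      Int.fract_eq_iff.2 ⟨by linarith, by linarith, 1, by push_cast; ring⟩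
    rw [hfract2, abs_of_nonneg (by linarith : 0 ≤ 2 * u - 1)]
    rcases lt_or_ge u (3 / 4) with hu' | hu'
    · rw [if_neg (by linarith), abs_of_nonpos (by linarith)]; ring
    · rw [if_pos (by linarith), abs_of_nonneg (by linarith)]; ring

lemma iterate_tent_eq_saw (n : ℕ) {x : ℝ} (hx : x ∈ Icc (0 : ℝ) 1) :
    tent^[n] x = saw (2 ^ n * x) := by
  induction n with
  | zero => simp [saw_of_mem_Icc hx]
  | succ n ih => rw [Function.iterate_succ_apply', ih, tent_saw, pow_succ, mul_comm _ 2, mul_assoc]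

lemma iterate_tent_eq_self_iff {n : ℕ} (hn : 1 ≤ n) {x : ℝ} (hx : x ∈ Icc (0 : ℝ) 1) :
    tent^[n] x = x ↔ ∃ k : ℤ, x = 2 * (k : ℝ) / (2 ^ n + 1) ∨ x = 2 * (k : ℝ) / (2 ^ n - 1) := by
  have hpos : (0 : ℝ) < 2 ^ n - 1 := by
    linarith [pow_le_pow_right₀ (by norm_num : (1 : ℝ) ≤ 2) hn]
  rw [iterate_tent_eq_saw n hx, saw_eq_iff hx]
  refine exists_congr fun k => or_congr ?_ ?_
  · rw [eq_div_iff (by positivity)]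
    constructor <;> intro h <;> linarith
  · rw [eq_div_iff hpos.ne']
    constructor <;> intro h <;> linarith

lemma exists_two_mul_intCast_div_le_lt_add {q x : ℝ} (hq : 0 < q) (hx : 0 ≤ x) :
    ∃ k : ℤ, 0 ≤ 2 * (k : ℝ) / q ∧ 2 * (k : ℝ) / q ≤ x ∧ x < 2 * (k : ℝ) / q + 2 / q := by
  refine ⟨⌊x * q / 2⌋, ?_, ?_, ?_⟩
  · have : (0 : ℝ) ≤ ⌊x * q / 2⌋ := by exact_mod_cast Int.floor_nonneg.2 (by positivity)
    positivity
  · rw [div_le_iff₀ hq]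
    linarith [Int.floor_le (x * q / 2)]
  · rw [← add_div, lt_div_iff₀ hq]
    linarith [Int.sub_one_lt_floor (x * q / 2)]

theorem tent_periodic_points_characterization :
    (∀ n : ℕ, 1 ≤ n → ∀ x ∈ Set.Icc (0:ℝ) 1,
      (tent^[n] x = x ↔
        ∃ k : ℤ, x = 2 * (k : ℝ) / (2^n + 1) ∨ x = 2 * (k : ℝ) / (2^n - 1))) ∧
    Set.Icc (0:ℝ) 1 ⊆
      closure {x ∈ Set.Icc (0:ℝ) 1 | ∃ n : ℕ, 1 ≤ n ∧ tent^[n] x = x} := by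
  refine ⟨fun n hn x hx => iterate_tent_eq_self_iff hn hx, fun x hx => ?_⟩
  rw [Metric.mem_closure_iff]
  intro ε hε
  obtain ⟨n, hn⟩ := pow_unbounded_of_one_lt (2 / ε + 1) one_lt_two
  have hε' : 0 < 2 / ε := div_pos two_pos hε
  have hn1 : 1 ≤ n := Nat.one_le_iff_ne_zero.2 fun h => by
    simp only [h, pow_zero] at hn; linarith
  have hq : (0 : ℝ) < 2 ^ n - 1 := by linarith
  have hmesh : 2 / (2 ^ n - 1 : ℝ) < ε := by
    rw [div_lt_iff₀ hq, ← div_lt_iff₀' hε]; linarith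
  obtain ⟨k, hk0, hkx, hxk⟩ := exists_two_mul_intCast_div_le_lt_add hq hx.1
  have hmem : 2 * (k : ℝ) / (2 ^ n - 1) ∈ Icc (0 : ℝ) 1 := ⟨hk0, hkx.trans hx.2⟩
  refine ⟨_, ⟨hmem, n, hn1, (iterate_tent_eq_self_iff hn1 hmem).2 ⟨k, Or.inr rfl⟩⟩, ?_⟩
  rw [Real.dist_eq, abs_of_nonneg (by linarith)]
  linarith
end

section
/- For the tent map F and any nonempty open interval S⊆[0,1], there exists n such that F^n(S)=[0,1]; consequently every nonempty open interval contains a periodic point, i.e., the tent map is topologically transitive with dense periodic points. -/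
/-!
The dyadic interval `[k/2ⁿ, (k+1)/2ⁿ]` is mapped by `tent` onto a dyadic interval of level `n - 1`,
since both branches of `tent` double lengths and send dyadic endpoints to dyadic endpoints. Hence
`tent^[n]` maps every dyadic interval of level `n` onto `[0, 1]`. Every open interval contains such
an interval, which gives the first claim, and a continuous self-map of a closed interval that covers
it has a fixed point, which gives a periodic point.
-/

open Set

lemma tent_eq_min (x : ℝ) : tent x = min (2*x) (2-2*x) := by
  unfold tent
  split_ifs
  · rw [min_eq_left (by linarith)]
  · rw [min_eq_right (by linarith)]

lemma continuous_tent : Continuous tent := by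
  simp only [funext tent_eq_min]
  fun_prop

lemma mapsTo_tent : MapsTo tent (Icc 0 1) (Icc 0 1) := by
  intro x ⟨h0, h1⟩
  unfold tent
  split_ifs <;> constructor <;> linarith

lemma surjOn_tent_left {a b : ℝ} (hb : b ≤ 1) : SurjOn tent (Icc (a/2) (b/2)) (Icc a b) := by
  intro y ⟨hay, hyb⟩
  refine ⟨y/2, ⟨by linarith, by linarith⟩, ?_⟩
  rw [tent, if_pos (by linarith)]
  ring

lemma surjOn_tent_right {a b : ℝ} (hb : b ≤ 1) :
    SurjOn tent (Icc (1 - b/2) (1 - a/2)) (Icc a b) := by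
  intro y ⟨hay, hyb⟩
  refine ⟨1 - y/2, ⟨by linarith, by linarith⟩, ?_⟩
  rw [tent_eq_min, min_eq_right (by linarith)]
  ring

def dyadicIcc (n k : ℕ) : Set ℝ := Icc (k / 2^n) ((k + 1) / 2^n)

lemma succ_div_two_pow_le_one {n k : ℕ} (hk : k < 2^n) : ((k : ℝ) + 1) / 2^n ≤ 1 := by
  rw [div_le_one (by positivity)]
  exact_mod_cast hk

lemma dyadicIcc_subset_Icc {n k : ℕ} (hk : k < 2^n) : dyadicIcc n k ⊆ Icc 0 1 :=
  Icc_subset_Icc (by positivity) (succ_div_two_pow_le_one hk)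

lemma surjOn_tent_dyadicIcc {n k : ℕ} (hk : k < 2^(n+1)) :
    ∃ j < 2^n, SurjOn tent (dyadicIcc (n+1) k) (dyadicIcc n j) := by
  rcases lt_or_ge k (2^n) with hkn | hkn
  · refine ⟨k, hkn, ?_⟩
    simpa only [dyadicIcc, pow_succ, div_div] using
      surjOn_tent_left (a := k / 2^n) (succ_div_two_pow_le_one hkn)
  · -- the right branch reverses orientation: `k` corresponds to `j = 2^(n+1) - 1 - k`
    set j := 2^(n+1) - 1 - k
    have hj : j < 2^n := by omega
    have hkj : (k : ℝ) = 2^(n+1) - j - 1 := by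
      have : k + 1 + j = 2^(n+1) := by omega
      rw [eq_sub_iff_add_eq, eq_sub_iff_add_eq]
      exact_mod_cast this
    have hI : dyadicIcc (n+1) k = Icc (1 - ((j + 1 : ℝ) / 2^n) / 2) (1 - (j / 2^n) / 2) := by
      unfold dyadicIcc
      rw [hkj]
      congr 1 <;> field_simp <;> ring
    exact ⟨j, hj, hI ▸ surjOn_tent_right (succ_div_two_pow_le_one hj)⟩

lemma surjOn_iterate_tent_dyadicIcc (n : ℕ) {k : ℕ} (hk : k < 2^n) :
    SurjOn tent^[n] (dyadicIcc n k) (Icc 0 1) := by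
  induction n generalizing k with
  | zero =>
    obtain rfl : k = 0 := by omega
    simpa [dyadicIcc] using surjOn_id (Icc (0 : ℝ) 1)
  | succ n ih =>
    obtain ⟨j, hj, h⟩ := surjOn_tent_dyadicIcc hk
    rw [Function.iterate_succ]
    exact (ih hj).comp h

lemma exists_dyadicIcc_subset_Ioo {a b : ℝ} (hab : a < b) (ha : 0 ≤ a) (hb : b ≤ 1) :
    ∃ n k, 0 < n ∧ k < 2^n ∧ dyadicIcc n k ⊆ Ioo a b := by
  obtain ⟨m, hm⟩ := exists_pow_lt_of_lt_one (by linarith : 0 < (b - a) / 2) one_half_lt_one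
  have hpos : (0 : ℝ) < 2^(m+1) := by positivity
  have hlen : 2 / 2^(m+1) < b - a := by
    have : 2 / (2 : ℝ)^(m+1) = (1/2)^m := by rw [pow_succ, one_div_pow]; field_simp
    linarith
  set k := ⌊a * 2^(m+1)⌋₊ + 1
  have hak : a < k / 2^(m+1) := by
    rw [lt_div_iff₀ hpos]
    push_cast [k]
    exact Nat.lt_floor_add_one _
  have hkb : (k + 1) / 2^(m+1) < b := by
    have := Nat.floor_le (by positivity : 0 ≤ a * 2^(m+1))
    rw [div_lt_iff₀ hpos] at hlen ⊢
    push_cast [k]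
    linarith
  have hk : k < 2^(m+1) := by
    have : (k : ℝ) + 1 < 2^(m+1) := (div_lt_one hpos).1 (hkb.trans_le hb)
    exact_mod_cast (lt_add_one (k : ℝ)).trans this
  exact ⟨m + 1, k, m.succ_pos, hk, fun x hx => ⟨hak.trans_le hx.1, hx.2.trans_lt hkb⟩⟩

theorem tent_transitive_dense_periodic (a b : ℝ) (hab : a < b)
    (hsub : Set.Ioo a b ⊆ Set.Icc (0:ℝ) 1) :
    (∃ n : ℕ, tent^[n] '' Set.Ioo a b = Set.Icc (0:ℝ) 1) ∧
    (∃ x ∈ Set.Ioo a b, ∃ p : ℕ, 1 ≤ p ∧ tent^[p] x = x) := by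
  have hab' : Icc a b ⊆ Icc 0 1 := by
    rwa [← closure_Ioo hab.ne, isClosed_Icc.closure_subset_iff]
  obtain ⟨ha, hb⟩ := (Icc_subset_Icc_iff hab.le).1 hab'
  obtain ⟨n, k, hn, hk, hI⟩ := exists_dyadicIcc_subset_Ioo hab ha hb
  have hsurj := surjOn_iterate_tent_dyadicIcc n hk
  refine ⟨⟨n, (mapsTo_tent.iterate n |>.mono_left hsub).image_subset.antisymm
    (hsurj.mono hI Subset.rfl)⟩, ?_⟩
  obtain ⟨x, hx, hfix⟩ := exists_mem_Icc_isFixedPt_of_surjOn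
    (continuous_tent.iterate n).continuousOn (by gcongr; linarith)
    (hsurj.mono Subset.rfl (dyadicIcc_subset_Icc hk))
  exact ⟨x, hI hx, n, hn, hfix⟩
end
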